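/- arXiv:2406.09360 — 3 statements merged into one kernel-verified Lean document; each statement's English description precedes it below -/
import Mathlib

section
/- Fix real numbers α ∈ [0, 1) and β ∈ [0, 1/2). There is a constant C(α, β) > 0 such that for all real x ≥ 1: ∑_{n ≤ x} (x/n)^α · s(n)^β ≤ C(α, β) · x, where the sum is over positive integers n ≤ x. -/
open Finset Real
open scoped Classical

/-- A positive integer `m` is squarefull if every prime dividing it does so to order at least 2. -/
def Squarefull (m : ℕ) : Prop := ∀ p : ℕ, p.Prime → p ∣ m → p ^ 2 ∣ m

/-- `s(n)`, the largest squarefull divisor of `n`. -/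
noncomputable def sfPart (n : ℕ) : ℕ := sSup {d : ℕ | d ∣ n ∧ Squarefull d}

lemma squarefull_one : Squarefull 1 := by
  intro p hp hdvd
  have := Nat.dvd_one.mp hdvd
  subst this
  exact absurd hp Nat.not_prime_one

lemma sfPart_mem (n : ℕ) (hn : 1 ≤ n) : sfPart n ∣ n ∧ Squarefull (sfPart n) := by
  have hne : {d : ℕ | d ∣ n ∧ Squarefull d}.Nonempty := ⟨1, one_dvd n, squarefull_one⟩
  have hbdd : BddAbove {d : ℕ | d ∣ n ∧ Squarefull d} :=
    ⟨n, fun d hd => Nat.le_of_dvd hn hd.1⟩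
  exact Nat.sSup_mem hne hbdd

lemma one_le_sfPart (n : ℕ) (hn : 1 ≤ n) : 1 ≤ sfPart n := by
  have hbdd : BddAbove {d : ℕ | d ∣ n ∧ Squarefull d} :=
    ⟨n, fun d hd => Nat.le_of_dvd hn hd.1⟩
  exact le_csSup hbdd ⟨one_dvd n, squarefull_one⟩

lemma exists_decomp (s : ℕ) (hs : 1 ≤ s) (h : Squarefull s) :
    ∃ a b : ℕ, 1 ≤ a ∧ 1 ≤ b ∧ a ^ 2 * b ^ 3 = s := by
  have hs0 : s ≠ 0 := by omega
  set v := s.factorization with hv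
  refine ⟨∏ p ∈ s.primeFactors, p ^ (if Odd (v p) then (v p - 3) / 2 else v p / 2),
    ∏ p ∈ s.primeFactors, p ^ (if Odd (v p) then 1 else 0), ?_, ?_, ?_⟩
  · exact Finset.one_le_prod' fun p hp =>
      Nat.one_le_pow _ _ (Nat.prime_of_mem_primeFactors hp).pos
  · exact Finset.one_le_prod' fun p hp =>
      Nat.one_le_pow _ _ (Nat.prime_of_mem_primeFactors hp).pos
  · rw [← Finset.prod_pow, ← Finset.prod_pow, ← Finset.prod_mul_distrib]
    have : ∀ p ∈ s.primeFactors,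
        (p ^ (if Odd (v p) then (v p - 3) / 2 else v p / 2)) ^ 2 *
          (p ^ (if Odd (v p) then 1 else 0)) ^ 3 = p ^ v p := by
      intro p hp
      have hpp := Nat.prime_of_mem_primeFactors hp
      have h2 : 2 ≤ v p := (hpp.pow_dvd_iff_le_factorization hs0).mp
        (h p hpp (Nat.dvd_of_mem_primeFactors hp))
      rw [← pow_mul, ← pow_mul, ← pow_add]
      congr 1
      by_cases ho : Odd (v p)
      · simp only [if_pos ho]
        obtain ⟨c, hc⟩ := ho
        omega
      · simp only [if_neg ho]
        obtain ⟨c, hc⟩ := Nat.not_odd_iff_even.mp ho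
        omega
    rw [Finset.prod_congr rfl this]
    rw [hv, ← Nat.support_factorization]
    exact Nat.factorization_prod_pow_eq_self hs0
lemma sum_rpow_neg_le (α : ℝ) (hα0 : 0 ≤ α) (hα1 : α < 1) (M : ℕ) :
    ∑ m ∈ Finset.Icc 1 M, (m : ℝ) ^ (-α) ≤ (M : ℝ) ^ (1 - α) / (1 - α) := by
  have h1α : 0 < 1 - α := by linarith
  induction M with
  | zero => simp [Real.zero_rpow (by linarith : (1:ℝ) - α ≠ 0)]
  | succ M ih =>
    rw [Finset.sum_Icc_succ_top (by omega : 1 ≤ M + 1)]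
    have hy0 : (0:ℝ) < (M:ℝ) + 1 := by positivity
    have hy : (1:ℝ) ≤ (M:ℝ) + 1 := by
      have : (0:ℝ) ≤ (M:ℝ) := Nat.cast_nonneg M
      linarith
    set y : ℝ := (M:ℝ) + 1 with hyd
    have hdiv : y ^ (1 - α) / y = y ^ (-α) := by
      rw [div_eq_mul_inv, ← Real.rpow_neg_one y, ← Real.rpow_add hy0]
      congr 1; ring
    have hstep : (M:ℝ) ^ (1 - α) ≤ y ^ (1 - α) - (1 - α) * y ^ (-α) := by
      have hM : (M:ℝ) = y * (1 + (-1 / y)) := by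
        field_simp
        rw [hyd]; ring
      have hb : (1 + (-1 / y)) ^ (1 - α) ≤ 1 + (1 - α) * (-1 / y) :=
        rpow_one_add_le_one_add_mul_self
          (by rw [neg_div, neg_le_neg_iff]; exact div_le_one_of_le₀ hy hy0.le)
          h1α.le (by linarith)
      have hnn : (0:ℝ) ≤ 1 + (-1 / y) := by
        rw [neg_div, ← sub_eq_add_neg, sub_nonneg]
        exact div_le_one_of_le₀ hy hy0.le
      calc (M:ℝ) ^ (1 - α) = (y * (1 + (-1 / y))) ^ (1 - α) := by rw [← hM]
        _ = y ^ (1 - α) * (1 + (-1 / y)) ^ (1 - α) := Real.mul_rpow hy0.le hnn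
        _ ≤ y ^ (1 - α) * (1 + (1 - α) * (-1 / y)) :=
            mul_le_mul_of_nonneg_left hb (Real.rpow_nonneg hy0.le _)
        _ = y ^ (1 - α) - (1 - α) * (y ^ (1 - α) / y) := by ring
        _ = y ^ (1 - α) - (1 - α) * y ^ (-α) := by rw [hdiv]
    have hcast : ((M + 1 : ℕ) : ℝ) = y := by push_cast; ring
    rw [hcast]
    have hkey : y ^ (-α) ≤ (y ^ (1 - α) - (M:ℝ) ^ (1 - α)) / (1 - α) := by
      rw [le_div_iff₀ h1α]; nlinarith [hstep]
    have hsplit : (y ^ (1 - α) - (M:ℝ) ^ (1 - α)) / (1 - α)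
        = y ^ (1 - α) / (1 - α) - (M:ℝ) ^ (1 - α) / (1 - α) := by ring
    linarith [ih, hkey]

lemma sum_Icc_rpow_le_tsum (t : ℝ) (ht : 1 < t) (N : ℕ) :
    ∑ a ∈ Finset.Icc 1 N, (a : ℝ) ^ (-t) ≤ ∑' a : ℕ, ((a : ℝ) ^ t)⁻¹ := by
  have hsum : Summable (fun a : ℕ => ((a:ℝ) ^ t)⁻¹) := Real.summable_nat_rpow_inv.mpr ht
  have hcg : ∀ a ∈ Finset.Icc 1 N, (a:ℝ) ^ (-t) = ((a:ℝ) ^ t)⁻¹ := fun a _ =>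
    Real.rpow_neg (by positivity) t
  rw [Finset.sum_congr rfl hcg]
  exact Summable.sum_le_tsum _ (fun a _ => by positivity) hsum
lemma sum_squarefull_le (β : ℝ) (hβ0 : 0 ≤ β) (hβ1 : β < 1 / 2) (N : ℕ) :
    ∑ s ∈ (Finset.Icc 1 N).filter Squarefull, (s : ℝ) ^ (β - 1) ≤
      (∑' a : ℕ, ((a : ℝ) ^ (2 * (1 - β)))⁻¹) * (∑' b : ℕ, ((b : ℝ) ^ (3 * (1 - β)))⁻¹) := by
  classical
  have hdec : ∀ s : ℕ, ∃ ab : ℕ × ℕ, 1 ≤ s → Squarefull s →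
      1 ≤ ab.1 ∧ 1 ≤ ab.2 ∧ ab.1 ^ 2 * ab.2 ^ 3 = s := by
    intro s
    by_cases h : 1 ≤ s ∧ Squarefull s
    · obtain ⟨a, b, h1, h2, h3⟩ := exists_decomp s h.1 h.2
      exact ⟨(a, b), fun _ _ => ⟨h1, h2, h3⟩⟩
    · exact ⟨(1, 1), fun h1 h2 => absurd ⟨h1, h2⟩ h⟩
  choose ψ hψ using hdec
  set S := (Finset.Icc 1 N).filter Squarefull with hS
  have hmem : ∀ s ∈ S, 1 ≤ s ∧ s ≤ N ∧ Squarefull s := by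
    intro s hs
    simp only [hS, Finset.mem_filter, Finset.mem_Icc] at hs
    tauto
  set G : ℕ × ℕ → ℝ := fun p => (p.1 : ℝ) ^ (-(2 * (1 - β))) * (p.2 : ℝ) ^ (-(3 * (1 - β)))
    with hG
  have hval : ∀ s ∈ S, (s : ℝ) ^ (β - 1) = G (ψ s) := by
    intro s hs
    obtain ⟨h1, hN', hsq⟩ := hmem s hs
    obtain ⟨ha, hb, hab⟩ := hψ s h1 hsq
    have hcast : (s : ℝ) = ((ψ s).1 : ℝ) ^ (2 : ℕ) * ((ψ s).2 : ℝ) ^ (3 : ℕ) := by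
      exact_mod_cast congrArg (Nat.cast : ℕ → ℝ) hab.symm
    rw [hG, hcast, Real.mul_rpow (by positivity) (by positivity),
      ← Real.rpow_natCast ((ψ s).1 : ℝ) 2, ← Real.rpow_natCast ((ψ s).2 : ℝ) 3,
      ← Real.rpow_mul (by positivity), ← Real.rpow_mul (by positivity),
      show ((2 : ℕ) : ℝ) * (β - 1) = -(2 * (1 - β)) by push_cast; ring,
      show ((3 : ℕ) : ℝ) * (β - 1) = -(3 * (1 - β)) by push_cast; ring]
  rw [Finset.sum_congr rfl hval]
  have hinj : ∀ s ∈ S, ∀ s' ∈ S, ψ s = ψ s' → s = s' := by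
    intro s hs s' hs' he
    obtain ⟨h1, _, hsq⟩ := hmem s hs
    obtain ⟨h1', _, hsq'⟩ := hmem s' hs'
    rw [← (hψ s h1 hsq).2.2, ← (hψ s' h1' hsq').2.2, he]
  rw [← Finset.sum_image hinj]
  have hsub : S.image ψ ⊆ Finset.Icc 1 N ×ˢ Finset.Icc 1 N := by
    intro p hp
    obtain ⟨s, hs, rfl⟩ := Finset.mem_image.mp hp
    obtain ⟨h1, hN', hsq⟩ := hmem s hs
    obtain ⟨ha, hb, hab⟩ := hψ s h1 hsq
    have hda : (ψ s).1 ∣ (ψ s).1 ^ 2 * (ψ s).2 ^ 3 := ⟨(ψ s).1 * (ψ s).2 ^ 3, by ring⟩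
    have hdb : (ψ s).2 ∣ (ψ s).1 ^ 2 * (ψ s).2 ^ 3 := ⟨(ψ s).1 ^ 2 * (ψ s).2 ^ 2, by ring⟩
    rw [hab] at hda hdb
    have hale : (ψ s).1 ≤ s := Nat.le_of_dvd h1 hda
    have hble : (ψ s).2 ≤ s := Nat.le_of_dvd h1 hdb
    simp only [Finset.mem_product, Finset.mem_Icc]
    omega
  refine le_trans (Finset.sum_le_sum_of_subset_of_nonneg hsub
    (fun p _ _ => by rw [hG]; positivity)) ?_
  rw [Finset.sum_product]
  simp only [hG]
  rw [← Finset.sum_mul_sum]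
  have e1 : ∀ a ∈ Finset.Icc 1 N, ∀ b ∈ Finset.Icc 1 N, True := fun _ _ _ _ => trivial
  have h1 := sum_Icc_rpow_le_tsum (2 * (1 - β)) (by linarith) N
  have h2 := sum_Icc_rpow_le_tsum (3 * (1 - β)) (by linarith) N
  exact mul_le_mul h1 h2 (Finset.sum_nonneg fun b _ => by positivity)
    (tsum_nonneg fun a => by positivity)
/-- Lemma 2.2 of the paper: for fixed `α ∈ [0,1)` and `β ∈ [0,1/2)`,
`∑_{n ≤ x} (x/n)^α s(n)^β ≪_{α,β} x`. -/
theorem sum_xn_alpha_sfPart_beta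
    (α β : ℝ) (hα0 : 0 ≤ α) (hα1 : α < 1) (hβ0 : 0 ≤ β) (hβ1 : β < 1 / 2) :
    ∃ C : ℝ, 0 < C ∧
      ∀ x : ℝ, 1 ≤ x →
        ∑ n ∈ Finset.Icc 1 ⌊x⌋₊, (x / n) ^ α * (sfPart n : ℝ) ^ β ≤ C * x := by
  classical
  have h1α : 0 < 1 - α := by linarith
  set K1 := ∑' a : ℕ, ((a : ℝ) ^ (2 * (1 - β)))⁻¹ with hK1
  set K2 := ∑' b : ℕ, ((b : ℝ) ^ (3 * (1 - β)))⁻¹ with hK2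
  have hK1nn : 0 ≤ K1 := tsum_nonneg fun a => by positivity
  have hK2nn : 0 ≤ K2 := tsum_nonneg fun a => by positivity
  have hAnn : 0 ≤ 1 / (1 - α) * K1 * K2 := by positivity
  refine ⟨1 / (1 - α) * K1 * K2 + 1, by linarith, ?_⟩
  intro x hx
  set N := ⌊x⌋₊ with hN
  have hx0 : (0 : ℝ) < x := by linarith
  have hN1 : 1 ≤ N := Nat.le_floor (by exact_mod_cast hx)
  have hNx : (N : ℝ) ≤ x := Nat.floor_le hx0.le
  set T := ((Finset.Icc 1 N).filter Squarefull).sigma (fun s => Finset.Icc 1 (N / s)) with hT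
  set G : (Σ _ : ℕ, ℕ) → ℝ := fun p => (x / ((p.1 : ℝ) * (p.2 : ℝ))) ^ α * (p.1 : ℝ) ^ β with hG
  set φ : ℕ → Σ _ : ℕ, ℕ := fun n => ⟨sfPart n, n / sfPart n⟩ with hφ
  have hprops : ∀ n ∈ Finset.Icc 1 N, sfPart n ∣ n ∧ Squarefull (sfPart n) ∧
      1 ≤ sfPart n ∧ sfPart n * (n / sfPart n) = n := by
    intro n hn
    rw [Finset.mem_Icc] at hn
    obtain ⟨hd, hsq⟩ := sfPart_mem n hn.1
    exact ⟨hd, hsq, one_le_sfPart n hn.1, Nat.mul_div_cancel' hd⟩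
  have hmemT : ∀ n ∈ Finset.Icc 1 N, φ n ∈ T := by
    intro n hn
    obtain ⟨hd, hsq, hs1, hsm⟩ := hprops n hn
    rw [Finset.mem_Icc] at hn
    rw [hT, hφ, Finset.mem_sigma, Finset.mem_filter, Finset.mem_Icc, Finset.mem_Icc]
    refine ⟨⟨⟨hs1, le_trans (Nat.le_of_dvd hn.1 hd) hn.2⟩, hsq⟩, ?_, ?_⟩
    · rw [Nat.one_le_div_iff hs1]
      exact Nat.le_of_dvd hn.1 hd
    · exact Nat.div_le_div_right hn.2
  have hinj : ∀ n ∈ Finset.Icc 1 N, ∀ n' ∈ Finset.Icc 1 N, φ n = φ n' → n = n' := by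
    intro n hn n' hn' he
    obtain ⟨_, _, _, hsm⟩ := hprops n hn
    obtain ⟨_, _, _, hsm'⟩ := hprops n' hn'
    have h1 : (φ n).1 = (φ n').1 := by rw [he]
    have h2 : (φ n).2 = (φ n').2 := by rw [he]
    simp only [hφ] at h1 h2
    rw [← hsm, ← hsm', h2, h1]
  have hFG : ∀ n ∈ Finset.Icc 1 N, (x / n) ^ α * (sfPart n : ℝ) ^ β = G (φ n) := by
    intro n hn
    obtain ⟨hd, hsq, hs1, hsm⟩ := hprops n hn
    simp only [hG, hφ]
    have hc : ((sfPart n : ℝ)) * ((n / sfPart n : ℕ) : ℝ) = (n : ℝ) := by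
      exact_mod_cast congrArg (Nat.cast : ℕ → ℝ) hsm
    rw [hc]
  have inner : ∀ s ∈ (Finset.Icc 1 N).filter Squarefull,
      ∑ m ∈ Finset.Icc 1 (N / s), G ⟨s, m⟩ ≤ x / (1 - α) * (s : ℝ) ^ (β - 1) := by
    intro s hs
    rw [Finset.mem_filter, Finset.mem_Icc] at hs
    obtain ⟨⟨hs1, hsN⟩, _⟩ := hs
    have hs0 : (0 : ℝ) < s := by exact_mod_cast hs1
    have hxs : 0 < x / s := div_pos hx0 hs0
    set M := N / s with hM
    have hterm : ∀ m ∈ Finset.Icc 1 M, G ⟨s, m⟩ = (x / s) ^ α * (s : ℝ) ^ β * (m : ℝ) ^ (-α) := by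
      intro m hm
      rw [Finset.mem_Icc] at hm
      have hm0 : (0 : ℝ) < m := by exact_mod_cast hm.1
      simp only [hG]
      have hd : x / ((s : ℝ) * m) = (x / s) / m := by ring
      rw [hd, Real.div_rpow hxs.le hm0.le, Real.rpow_neg hm0.le]
      ring
    rw [Finset.sum_congr rfl hterm, ← Finset.mul_sum]
    have hsum := sum_rpow_neg_le α hα0 hα1 M
    have hMle : (M : ℝ) ≤ x / s := by
      calc (M : ℝ) ≤ (N : ℝ) / (s : ℝ) := Nat.cast_div_le
        _ ≤ x / s := by gcongr
    have hMp : ((M : ℝ)) ^ (1 - α) ≤ (x / s) ^ (1 - α) :=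
      Real.rpow_le_rpow (Nat.cast_nonneg M) hMle h1α.le
    have e1 : (x / s) ^ α * (x / s) ^ (1 - α) = x / s := by
      rw [← Real.rpow_add hxs]
      norm_num
    calc (x / s) ^ α * (s : ℝ) ^ β * ∑ m ∈ Finset.Icc 1 M, (m : ℝ) ^ (-α)
        ≤ (x / s) ^ α * (s : ℝ) ^ β * ((M : ℝ) ^ (1 - α) / (1 - α)) := by
          apply mul_le_mul_of_nonneg_left hsum (by positivity)
      _ ≤ (x / s) ^ α * (s : ℝ) ^ β * ((x / s) ^ (1 - α) / (1 - α)) := by gcongr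
      _ = ((x / s) ^ α * (x / s) ^ (1 - α)) * (s : ℝ) ^ β / (1 - α) := by ring
      _ = (x / s) * (s : ℝ) ^ β / (1 - α) := by rw [e1]
      _ = x / (1 - α) * ((s : ℝ) ^ β / s) := by ring
      _ = x / (1 - α) * (s : ℝ) ^ (β - 1) := by rw [Real.rpow_sub hs0, Real.rpow_one]
  have hsq := sum_squarefull_le β hβ0 hβ1 N
  rw [← hK1, ← hK2] at hsq
  calc ∑ n ∈ Finset.Icc 1 N, (x / n) ^ α * (sfPart n : ℝ) ^ β
      = ∑ n ∈ Finset.Icc 1 N, G (φ n) := Finset.sum_congr rfl hFG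
    _ = ∑ p ∈ (Finset.Icc 1 N).image φ, G p := (Finset.sum_image hinj).symm
    _ ≤ ∑ p ∈ T, G p := Finset.sum_le_sum_of_subset_of_nonneg
        (fun p hp => by obtain ⟨n, hn, rfl⟩ := Finset.mem_image.mp hp; exact hmemT n hn)
        (fun p _ _ => by simp only [hG]; positivity)
    _ = ∑ s ∈ (Finset.Icc 1 N).filter Squarefull, ∑ m ∈ Finset.Icc 1 (N / s), G ⟨s, m⟩ := by
        rw [hT]; exact Finset.sum_sigma _ _ _
    _ ≤ ∑ s ∈ (Finset.Icc 1 N).filter Squarefull, x / (1 - α) * (s : ℝ) ^ (β - 1) :=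
        Finset.sum_le_sum inner
    _ = x / (1 - α) * ∑ s ∈ (Finset.Icc 1 N).filter Squarefull, (s : ℝ) ^ (β - 1) := by
        rw [Finset.mul_sum]
    _ ≤ x / (1 - α) * (K1 * K2) := by
        exact mul_le_mul_of_nonneg_left hsq (by positivity)
    _ = (1 / (1 - α) * K1 * K2) * x := by ring
    _ ≤ (1 / (1 - α) * K1 * K2 + 1) * x := by nlinarith [hx0.le]
end

section
/- There is an absolute constant C > 0 such that uniformly for all u ∈ [0, 1], all α ∈ (0, 1), and all δ > 0: sin(πα) · ∫_{[u−δ, u+δ] ∩ [0,1]} t^{α−1} (1 − t)^{−α} dt ≤ C · δ / ( (u + δ)^{1−α} · (1 − u + δ)^{α} ). -/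
/-!
Bound the integrand by `2 t^(α-1) + 2 (1-t)^(-α)` (one of `t`, `1-t` is at least `1/2`) and
integrate exactly. Against `sin (π α) ≤ π min(α, 1-α)` this leaves the increments
`b^α - a^α` and `(1-a)^(1-α) - (1-b)^(1-α)` over `[a, b] = [u-δ, u+δ] ∩ [0, 1]`, which are
symmetric under `(u, α) ↦ (1-u, 1-α)`. By concavity `b^α - a^α ≤ 2δ (u+δ)^(α-1)`, which is
the claim when `δ ≤ 1`; for `δ > 1` use `b^α - a^α ≤ 1` and
`(u+δ)^(1-α) (1-u+δ)^α ≤ 1 + δ` (weighted AM-GM).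
-/

open Real MeasureTheory Set

lemma rpow_le_two_of_half_le {x β : ℝ} (hx : 1 / 2 ≤ x) (hβ1 : -1 ≤ β) (hβ0 : β ≤ 0) :
    x ^ β ≤ 2 := by
  calc x ^ β ≤ (1 / 2 : ℝ) ^ β := rpow_le_rpow_of_nonpos (by norm_num) hx hβ0
    _ ≤ (1 / 2 : ℝ) ^ (-1 : ℝ) := rpow_le_rpow_of_exponent_ge (by norm_num) (by norm_num) hβ1
    _ = 2 := by norm_num [rpow_neg_one]

lemma rpow_sub_one_mul_one_sub_rpow_neg_le {α t : ℝ} (hα0 : 0 ≤ α) (hα1 : α ≤ 1)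
    (ht0 : 0 ≤ t) (ht1 : t ≤ 1) :
    t ^ (α - 1) * (1 - t) ^ (-α) ≤ 2 * t ^ (α - 1) + 2 * (1 - t) ^ (-α) := by
  have hx : 0 ≤ t ^ (α - 1) := rpow_nonneg ht0 _
  have hy : 0 ≤ (1 - t) ^ (-α) := rpow_nonneg (by linarith) _
  rcases le_total t (1 / 2) with ht | ht
  · have := rpow_le_two_of_half_le (x := 1 - t) (β := -α)
      (by linarith) (by linarith) (by linarith)
    nlinarith
  · have := rpow_le_two_of_half_le (β := α - 1) ht (by linarith) (by linarith)
    nlinarith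

lemma integrableOn_Icc_rpow_sub_one {α a b : ℝ} (hα : 0 < α) :
    IntegrableOn (fun t : ℝ => t ^ (α - 1)) (Icc a b) := by
  rw [integrableOn_Icc_iff_integrableOn_Ioc]
  exact (intervalIntegral.intervalIntegrable_rpow' (by linarith : (-1 : ℝ) < α - 1)).1

lemma integrableOn_Icc_one_sub_rpow_neg {α a b : ℝ} (hα : α < 1) :
    IntegrableOn (fun t : ℝ => (1 - t) ^ (-α)) (Icc a b) := by
  rw [integrableOn_Icc_iff_integrableOn_Ioc]
  have h := (intervalIntegral.intervalIntegrable_rpow' (a := 1 - a) (b := 1 - b)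
    (by linarith : (-1 : ℝ) < -α)).comp_sub_left 1
  simp only [sub_sub_cancel] at h
  exact h.1

lemma integral_Icc_rpow_sub_one {α a b : ℝ} (hα : 0 < α) (hab : a ≤ b) :
    ∫ t in Icc a b, t ^ (α - 1) = (b ^ α - a ^ α) / α := by
  rw [integral_Icc_eq_integral_Ioc, ← intervalIntegral.integral_of_le hab,
    integral_rpow (Or.inl (by linarith)), sub_add_cancel]

lemma integral_Icc_one_sub_rpow_neg {α a b : ℝ} (hα : α < 1) (hab : a ≤ b) :
    ∫ t in Icc a b, (1 - t) ^ (-α) = ((1 - a) ^ (1 - α) - (1 - b) ^ (1 - α)) / (1 - α) := by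
  rw [integral_Icc_eq_integral_Ioc, ← intervalIntegral.integral_of_le hab,
    intervalIntegral.integral_comp_sub_left (fun x : ℝ => x ^ (-α)) 1,
    integral_rpow (Or.inl (by linarith)), neg_add_eq_sub]

lemma setIntegral_Icc_beta_le {α a b : ℝ} (hα0 : 0 < α) (hα1 : α < 1)
    (ha : 0 ≤ a) (hab : a ≤ b) (hb : b ≤ 1) :
    ∫ t in Icc a b, t ^ (α - 1) * (1 - t) ^ (-α)
      ≤ 2 * ((b ^ α - a ^ α) / α)
        + 2 * (((1 - a) ^ (1 - α) - (1 - b) ^ (1 - α)) / (1 - α)) := by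
  have hg := ((integrableOn_Icc_rpow_sub_one (a := a) (b := b) hα0).const_mul 2).add
    ((integrableOn_Icc_one_sub_rpow_neg (a := a) (b := b) hα1).const_mul 2)
  calc ∫ t in Icc a b, t ^ (α - 1) * (1 - t) ^ (-α)
      ≤ ∫ t in Icc a b, (2 * t ^ (α - 1) + 2 * (1 - t) ^ (-α)) := by
        refine integral_mono_of_nonneg ?_ hg ?_ <;>
          filter_upwards [ae_restrict_mem measurableSet_Icc] with t ht
        · exact mul_nonneg (rpow_nonneg (ha.trans ht.1) _)
            (rpow_nonneg (by linarith [ht.2]) _)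
        · exact rpow_sub_one_mul_one_sub_rpow_neg_le hα0.le hα1.le (ha.trans ht.1)
            (ht.2.trans hb)
    _ = _ := by
        rw [integral_add ((integrableOn_Icc_rpow_sub_one hα0).const_mul 2)
            ((integrableOn_Icc_one_sub_rpow_neg hα1).const_mul 2),
          integral_const_mul, integral_const_mul, integral_Icc_rpow_sub_one hα0 hab,
          integral_Icc_one_sub_rpow_neg hα1 hab]

lemma sin_pi_mul_mul_setIntegral_Icc_beta_le {α a b : ℝ} (hα0 : 0 < α) (hα1 : α < 1)
    (ha : 0 ≤ a) (hab : a ≤ b) (hb : b ≤ 1) :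
    sin (π * α) * ∫ t in Icc a b, t ^ (α - 1) * (1 - t) ^ (-α)
      ≤ 2 * π * ((b ^ α - a ^ α) + ((1 - a) ^ (1 - α) - (1 - b) ^ (1 - α))) := by
  have hsin0 : 0 ≤ sin (π * α) :=
    sin_nonneg_of_nonneg_of_le_pi (by positivity) (by nlinarith [pi_pos])
  have hsinα : sin (π * α) / α ≤ π :=
    (div_le_iff₀ hα0).2 (sin_le (by positivity))
  have hsin1α : sin (π * α) / (1 - α) ≤ π := by
    refine (div_le_iff₀ (by linarith)).2 ?_
    calc sin (π * α) = sin (π * (1 - α)) := by rw [mul_one_sub, sin_pi_sub]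
      _ ≤ π * (1 - α) := sin_le (by nlinarith [pi_pos])
  have hX : 0 ≤ b ^ α - a ^ α := sub_nonneg.2 (rpow_le_rpow ha hab hα0.le)
  have hY : 0 ≤ (1 - a) ^ (1 - α) - (1 - b) ^ (1 - α) :=
    sub_nonneg.2 (rpow_le_rpow (by linarith) (by linarith) (by linarith))
  calc sin (π * α) * ∫ t in Icc a b, t ^ (α - 1) * (1 - t) ^ (-α)
      ≤ sin (π * α) * (2 * ((b ^ α - a ^ α) / α)
          + 2 * (((1 - a) ^ (1 - α) - (1 - b) ^ (1 - α)) / (1 - α))) :=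
        mul_le_mul_of_nonneg_left (setIntegral_Icc_beta_le hα0 hα1 ha hab hb) hsin0
    _ = 2 * (sin (π * α) / α) * (b ^ α - a ^ α)
          + 2 * (sin (π * α) / (1 - α)) * ((1 - a) ^ (1 - α) - (1 - b) ^ (1 - α)) := by ring
    _ ≤ 2 * π * (b ^ α - a ^ α) + 2 * π * ((1 - a) ^ (1 - α) - (1 - b) ^ (1 - α)) := by
        gcongr
    _ = _ := by ring

lemma rpow_sub_rpow_le_rpow_sub_one_mul {α a b s : ℝ} (hα0 : 0 ≤ α) (hα1 : α ≤ 1)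
    (ha : 0 ≤ a) (hab : a ≤ b) (hbs : b ≤ s) (hs : 0 < s) :
    b ^ α - a ^ α ≤ s ^ (α - 1) * (s - a) := by
  have hb : b ^ α ≤ s ^ α := rpow_le_rpow (ha.trans hab) hbs hα0
  have hs' : s ^ (α - 1) * s = s ^ α := by rw [rpow_sub_one hs.ne', div_mul_cancel₀ _ hs.ne']
  have ha' : s ^ (α - 1) * a ≤ a ^ α := by
    rcases ha.eq_or_lt with rfl | ha
    · simpa using rpow_nonneg le_rfl α
    · calc s ^ (α - 1) * a ≤ a ^ (α - 1) * a :=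
            mul_le_mul_of_nonneg_right
              (rpow_le_rpow_of_nonpos ha (hab.trans hbs) (by linarith)) ha.le
        _ = a ^ α := by rw [rpow_sub_one ha.ne', div_mul_cancel₀ _ ha.ne']
  rw [mul_sub, hs']
  linarith

lemma rpow_sub_rpow_mul_weight_le {u α δ a b : ℝ} (hu0 : 0 ≤ u) (hu1 : u ≤ 1)
    (hα0 : 0 ≤ α) (hα1 : α ≤ 1) (hδ : 0 < δ) (ha : 0 ≤ a) (hab : a ≤ b) (hb : b ≤ 1)
    (hua : u - δ ≤ a) (hbu : b ≤ u + δ) :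
    (b ^ α - a ^ α) * ((u + δ) ^ (1 - α) * (1 - u + δ) ^ α) ≤ 4 * δ := by
  have hs : 0 < u + δ := by linarith
  have hw : 0 < 1 - u + δ := by linarith
  have hW : 0 ≤ (u + δ) ^ (1 - α) * (1 - u + δ) ^ α := by positivity
  rcases le_or_gt δ 1 with hδ1 | hδ1
  · have hchord : b ^ α - a ^ α ≤ (u + δ) ^ (α - 1) * (2 * δ) :=
      (rpow_sub_rpow_le_rpow_sub_one_mul hα0 hα1 ha hab hbu hs).trans
        (mul_le_mul_of_nonneg_left (by linarith) (rpow_nonneg hs.le _))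
    have hcancel : (u + δ) ^ (α - 1) * (u + δ) ^ (1 - α) = 1 := by
      rw [← rpow_add hs, sub_add_sub_cancel', sub_self, rpow_zero]
    have hw2 : (1 - u + δ) ^ α ≤ 2 :=
      calc (1 - u + δ) ^ α ≤ 2 ^ α := rpow_le_rpow hw.le (by linarith) hα0
        _ ≤ 2 ^ (1 : ℝ) := rpow_le_rpow_of_exponent_le one_le_two hα1
        _ = 2 := rpow_one 2
    calc (b ^ α - a ^ α) * ((u + δ) ^ (1 - α) * (1 - u + δ) ^ α)
        ≤ (u + δ) ^ (α - 1) * (2 * δ) * ((u + δ) ^ (1 - α) * (1 - u + δ) ^ α) :=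
          mul_le_mul_of_nonneg_right hchord hW
      _ = 2 * δ * (1 - u + δ) ^ α := by linear_combination 2 * δ * (1 - u + δ) ^ α * hcancel
      _ ≤ 2 * δ * 2 := by gcongr
      _ = 4 * δ := by ring
  · have hX : b ^ α - a ^ α ≤ 1 := by
      have := rpow_le_one (ha.trans hab) hb hα0
      have := rpow_nonneg ha α
      linarith
    have hamgm :
        (u + δ) ^ (1 - α) * (1 - u + δ) ^ α ≤ (1 - α) * (u + δ) + α * (1 - u + δ) :=
      geom_mean_le_arith_mean2_weighted (by linarith) hα0 hs.le hw.le (by ring)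
    calc (b ^ α - a ^ α) * ((u + δ) ^ (1 - α) * (1 - u + δ) ^ α)
        ≤ 1 * ((1 - α) * (u + δ) + α * (1 - u + δ)) := mul_le_mul hX hamgm hW zero_le_one
      _ ≤ 4 * δ := by nlinarith

/-- Lemma 9.1 of the paper (Beta-type integral estimate): uniformly for `u ∈ [0,1]`,
`α ∈ (0,1)` and `δ > 0`,
`sin(πα) ∫_{[u-δ,u+δ]∩[0,1]} t^{α-1} (1-t)^{-α} dt ≪ δ / ((u+δ)^{1-α} (1-u+δ)^α)`. -/
theorem beta_integral_estimate :
    ∃ C : ℝ, 0 < C ∧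
      ∀ u α δ : ℝ, 0 ≤ u → u ≤ 1 → 0 < α → α < 1 → 0 < δ →
        Real.sin (Real.pi * α) *
            ∫ t in Set.Icc (u - δ) (u + δ) ∩ Set.Icc (0 : ℝ) 1,
              t ^ (α - 1) * (1 - t) ^ (-α)
          ≤ C * δ / ((u + δ) ^ (1 - α) * (1 - u + δ) ^ α) := by
  refine ⟨16 * π, by positivity, fun u α δ hu0 hu1 hα0 hα1 hδ => ?_⟩
  rw [Icc_inter_Icc]
  set a := max (u - δ) 0
  set b := min (u + δ) 1
  have ha : 0 ≤ a := le_max_right _ _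
  have hb : b ≤ 1 := min_le_right _ _
  have hab : a ≤ b :=
    max_le (le_min (by linarith) (by linarith)) (le_min (by linarith) zero_le_one)
  have hX := rpow_sub_rpow_mul_weight_le hu0 hu1 hα0.le hα1.le hδ ha hab hb
    (le_max_left _ _) (min_le_left _ _)
  have hY := rpow_sub_rpow_mul_weight_le (u := 1 - u) (α := 1 - α) (a := 1 - b) (b := 1 - a)
    (by linarith) (by linarith) (by linarith) (by linarith) hδ (by linarith) (by linarith)
    (by linarith) (by linarith [min_le_left (u + δ) 1]) (by linarith [le_max_left (u - δ) 0])
  rw [sub_sub_cancel, sub_sub_cancel, mul_comm ((1 - u + δ) ^ α)] at hY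
  rw [le_div_iff₀ (by positivity)]
  calc sin (π * α) * (∫ t in Icc a b, t ^ (α - 1) * (1 - t) ^ (-α))
        * ((u + δ) ^ (1 - α) * (1 - u + δ) ^ α)
      ≤ 2 * π * ((b ^ α - a ^ α) + ((1 - a) ^ (1 - α) - (1 - b) ^ (1 - α)))
        * ((u + δ) ^ (1 - α) * (1 - u + δ) ^ α) := by
        gcongr ?_ * _
        exact sin_pi_mul_mul_setIntegral_Icc_beta_le hα0 hα1 ha hab hb
    _ ≤ 16 * π * δ := by nlinarith [pi_pos]
end

section
/- Let (x_i)_{i ≥ 1} and (y_i)_{i ≥ 1} be two non-increasing sequences of real numbers, and let σ, ρ : ℕ → ℕ be bijections (ℕ = positive integers). Then ∑_{i ≥ 1} |x_i − y_i| ≤ ∑_{i ≥ 1} |x_{σ(i)} − y_{ρ(i)}|, where both sums are interpreted as sums of non-negative terms with values in [0, ∞]. -/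
open ENNReal MeasureTheory
open scoped symmDiff

lemma tsum_indicator_count (S : Set ℕ) :
    (∑' i, S.indicator (1 : ℕ → ℝ≥0∞) i) = Measure.count S := by
  rw [← MeasureTheory.lintegral_count, lintegral_indicator_one (MeasurableSet.of_discrete (s := S))]

lemma downset_total {A B : Set ℕ} (hA : ∀ ⦃i j : ℕ⦄, j ≤ i → i ∈ A → j ∈ A)
    (hB : ∀ ⦃i j : ℕ⦄, j ≤ i → i ∈ B → j ∈ B) : A ⊆ B ∨ B ⊆ A := by
  by_cases h : A ⊆ B
  · exact Or.inl h
  · right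
    obtain ⟨a, haA, haB⟩ := Set.not_subset.mp h
    intro b hb
    rcases le_total b a with hba | hab
    · exact hA hba haA
    · exact absurd (hB hab hb) haB

lemma downset_infinite {A : Set ℕ} (hA : ∀ ⦃i j : ℕ⦄, j ≤ i → i ∈ A → j ∈ A)
    (h : A.Infinite) : A = Set.univ := by
  ext n
  simp only [Set.mem_univ, iff_true]
  obtain ⟨b, hbA, hnb⟩ := h.exists_gt n
  exact hA hnb.le hbA

lemma count_symmDiff_le {A B C : Set ℕ}
    (hA : ∀ ⦃i j : ℕ⦄, j ≤ i → i ∈ A → j ∈ A)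
    (hB : ∀ ⦃i j : ℕ⦄, j ≤ i → i ∈ B → j ∈ B)
    (hBC : Measure.count C = Measure.count B) :
    Measure.count (A ∆ B) ≤ Measure.count (A ∆ C) := by
  have hCA1 : Measure.count C ≤ Measure.count A + Measure.count (A ∆ C) := by
    calc Measure.count C = Measure.count ((C ∩ A) ∪ (C \ A)) := by
          rw [Set.inter_union_diff]
      _ ≤ Measure.count (C ∩ A) + Measure.count (C \ A) := measure_union_le _ _
      _ ≤ Measure.count A + Measure.count (A ∆ C) :=
          add_le_add (measure_mono Set.inter_subset_right)
            (measure_mono fun i hi => Set.mem_symmDiff.mpr (Or.inr ⟨hi.1, hi.2⟩))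
  have hAC1 : Measure.count A ≤ Measure.count C + Measure.count (A ∆ C) := by
    calc Measure.count A = Measure.count ((A ∩ C) ∪ (A \ C)) := by
          rw [Set.inter_union_diff]
      _ ≤ Measure.count (A ∩ C) + Measure.count (A \ C) := measure_union_le _ _
      _ ≤ Measure.count C + Measure.count (A ∆ C) :=
          add_le_add (measure_mono Set.inter_subset_right)
            (measure_mono fun i hi => Set.mem_symmDiff.mpr (Or.inl ⟨hi.1, hi.2⟩))
  rcases downset_total hA hB with hAB | hBA
  · rw [symmDiff_of_le hAB]
    by_cases hfin : A.Finite
    · have hAtop : Measure.count A ≠ ∞ := (Measure.count_apply_lt_top.mpr hfin).ne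
      have e1 : Measure.count (B \ A) + Measure.count A = Measure.count B := by
        rw [← measure_union Set.disjoint_sdiff_left (.of_discrete (s := A)),
          Set.diff_union_of_subset hAB]
      have h2 : Measure.count (B \ A) + Measure.count A
          ≤ Measure.count (A ∆ C) + Measure.count A := by
        rw [e1, ← hBC]
        calc Measure.count C ≤ Measure.count A + Measure.count (A ∆ C) := hCA1
          _ = Measure.count (A ∆ C) + Measure.count A := add_comm _ _
      exact (ENNReal.add_le_add_iff_right hAtop).mp h2
    · have hAu : A = Set.univ := downset_infinite hA hfin
      have hBu : B = Set.univ := Set.eq_univ_of_univ_subset (hAu ▸ hAB)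
      simp [hAu, hBu]
  · rw [symmDiff_comm, symmDiff_of_le hBA]
    by_cases hfin : B.Finite
    · have hBtop : Measure.count B ≠ ∞ := (Measure.count_apply_lt_top.mpr hfin).ne
      have e1 : Measure.count (A \ B) + Measure.count B = Measure.count A := by
        rw [← measure_union Set.disjoint_sdiff_left (.of_discrete (s := B)),
          Set.diff_union_of_subset hBA]
      have h2 : Measure.count (A \ B) + Measure.count B
          ≤ Measure.count (A ∆ C) + Measure.count B := by
        rw [e1]
        calc Measure.count A ≤ Measure.count C + Measure.count (A ∆ C) := hAC1
          _ = Measure.count (A ∆ C) + Measure.count B := by rw [hBC, add_comm]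
      exact (ENNReal.add_le_add_iff_right hBtop).mp h2
    · have hBu : B = Set.univ := downset_infinite hB hfin
      have hAu : A = Set.univ := Set.eq_univ_of_univ_subset (hBu ▸ hBA)
      simp [hAu, hBu]

lemma tsum_ico_eq (x z : ℕ → ℝ) (t : ℝ) :
    (∑' i, (Set.Ico (min (x i) (z i)) (max (x i) (z i))).indicator (1 : ℝ → ℝ≥0∞) t)
      = Measure.count ({i | t < x i} ∆ {i | t < z i}) := by
  rw [← tsum_indicator_count]
  refine tsum_congr fun i => ?_
  by_cases h1 : t < x i <;> by_cases h2 : t < z i <;>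
    simp [Set.indicator_apply, Set.mem_Ico, Set.mem_symmDiff, h1, h2, min_le_iff, lt_max_iff,
      not_lt.mp, le_of_lt, not_lt]

lemma main_lemma (x y : ℕ → ℝ) (hx : Antitone x) (hy : Antitone y)
    (τ : ℕ → ℕ) (hτ : Function.Bijective τ) :
    (∑' i : ℕ, ENNReal.ofReal |x i - y i|) ≤ ∑' i : ℕ, ENNReal.ofReal |x i - y (τ i)| := by
  have key : ∀ z : ℕ → ℝ, (∑' i, ENNReal.ofReal |x i - z i|)
      = ∫⁻ t, ∑' i,
          (Set.Ico (min (x i) (z i)) (max (x i) (z i))).indicator (1 : ℝ → ℝ≥0∞) t := by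
    intro z
    calc (∑' i, ENNReal.ofReal |x i - z i|)
        = ∑' i, ∫⁻ t, (Set.Ico (min (x i) (z i)) (max (x i) (z i))).indicator (1 : ℝ → ℝ≥0∞) t := by
          refine tsum_congr fun i => ?_
          rw [lintegral_indicator_one measurableSet_Ico, Real.volume_Ico, max_sub_min_eq_abs,
            abs_sub_comm]
      _ = _ := (lintegral_tsum fun i => (measurable_const.indicator measurableSet_Ico).aemeasurable).symm
  rw [key y, key fun i => y (τ i)]
  refine lintegral_mono fun t => ?_
  rw [tsum_ico_eq, tsum_ico_eq]
  have hA : ∀ ⦃i j : ℕ⦄, j ≤ i → i ∈ {i | t < x i} → j ∈ {i | t < x i} :=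
    fun i j hji hi => lt_of_lt_of_le hi (hx hji)
  have hB : ∀ ⦃i j : ℕ⦄, j ≤ i → i ∈ {i | t < y i} → j ∈ {i | t < y i} :=
    fun i j hji hi => lt_of_lt_of_le hi (hy hji)
  have hC : {i | t < y (τ i)} = τ ⁻¹' {i | t < y i} := rfl
  have hcount : Measure.count (τ ⁻¹' {i | t < y i}) = Measure.count {i | t < y i} := by
    set e : ℕ ≃ ℕ := Equiv.ofBijective τ hτ
    have : τ ⁻¹' {i | t < y i} = e.symm '' {i | t < y i} := by
      rw [Equiv.image_eq_preimage_symm, Equiv.symm_symm]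
      rfl
    rw [this]
    exact Measure.count_injective_image e.symm.injective _
  rw [hC]
  exact count_symmDiff_le hA hB hcount

/-- Rearrangement inequality (Lemma 3.1 of the paper): for non-increasing sequences
`(x_i)` and `(y_i)` of reals and bijections `σ, ρ` of the index set,
`∑_i |x_i - y_i| ≤ ∑_i |x_{σ(i)} - y_{ρ(i)}|`, the sums being taken in `[0, ∞]`. -/
theorem rearrangement_inequality
    (x y : ℕ → ℝ) (hx : Antitone x) (hy : Antitone y)
    (σ ρ : ℕ → ℕ) (hσ : Function.Bijective σ) (hρ : Function.Bijective ρ) :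
    (∑' i : ℕ, ENNReal.ofReal |x i - y i|)
      ≤ ∑' i : ℕ, ENNReal.ofReal |x (σ i) - y (ρ i)| := by
  set e : ℕ ≃ ℕ := Equiv.ofBijective σ hσ with he
  set τ : ℕ → ℕ := ρ ∘ e.symm with hτdef
  have hτ : Function.Bijective τ := hρ.comp e.symm.bijective
  have hre : ∀ i, x (σ i) - y (ρ i) = x (e i) - y (τ (e i)) := by
    intro i
    have h1 : e i = σ i := rfl
    have h2 : τ (e i) = ρ i := by
      simp [hτdef]
    rw [h2, h1]
  calc (∑' i : ℕ, ENNReal.ofReal |x i - y i|)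
      ≤ ∑' i : ℕ, ENNReal.ofReal |x i - y (τ i)| := main_lemma x y hx hy τ hτ
    _ = ∑' i : ℕ, ENNReal.ofReal |x (e i) - y (τ (e i))| :=
        (e.tsum_eq fun j => ENNReal.ofReal |x j - y (τ j)|).symm
    _ = ∑' i : ℕ, ENNReal.ofReal |x (σ i) - y (ρ i)| := by
        refine tsum_congr fun i => ?_
        rw [hre i]
end
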